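/- arXiv:1807.08964 — 6 statements merged into one kernel-verified Lean document; each statement's English description precedes it below -/
import Mathlib

section
/- Let Φ = ΠX.φ be a fully quantified Boolean formula in prenex form with universal variables U and existential variables E (quantified in a given prefix order). Then Φ is false if and only if there exists a set A of full assignments α : U → Bool such that the conjunction over α ∈ A of the instantiations φ^α (with existential variables annotated per α and treated as distinct fresh variables) is unsatisfiable. -/
namespace QBF

/-- Semantics of a prenex QBF: prefix given by `q : Fin n → Bool`
(`true` = universally quantified, `false` = existentially quantified),
matrix `φ : (Fin n → Bool) → Bool`. -/
def Qeval : (n : ℕ) → (Fin n → Bool) → ((Fin n → Bool) → Bool) → Prop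
  | 0, _, φ => φ (fun i => i.elim0) = true
  | (n+1), q, φ =>
      if q 0 = true then
        ∀ b : Bool, Qeval n (fun i => q i.succ) (fun τ => φ (Fin.cons b τ))
      else
        ∃ b : Bool, Qeval n (fun i => q i.succ) (fun τ => φ (Fin.cons b τ))

/-- Full assignments of the universal variables. -/
def UA (n : ℕ) (q : Fin n → Bool) := {i : Fin n // q i = true} → Bool

/-- Full assignments of the existential variables. -/
def EA (n : ℕ) (q : Fin n → Bool) := {i : Fin n // q i = false} → Bool

/-- Annotated variables: a variable together with an annotation recording
(partial) values of the prefix-preceding variables of the other kind. -/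
def Ann (n : ℕ) := Fin n × (Fin n → Option Bool)

/-- Annotation of variable `j` by the values of `α` on the universal
variables preceding `j` in the prefix. -/
def annU {n : ℕ} (q : Fin n → Bool) (α : UA n q) (j : Fin n) : Fin n → Option Bool :=
  fun i => if h : q i = true ∧ i < j then some (α ⟨i, h.1⟩) else none

/-- Annotation of variable `j` by the values of `σ` on the existential
variables preceding `j` in the prefix. -/
def annE {n : ℕ} (q : Fin n → Bool) (σ : EA n q) (j : Fin n) : Fin n → Option Bool :=
  fun i => if h : q i = false ∧ i < j then some (σ ⟨i, h.1⟩) else none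

/-- The assignment realizing the instantiation `φ^α`: universal variables get
their `α`-values, existential variables get the value `τ` assigns to the
corresponding annotated copy. -/
def combA {n : ℕ} (q : Fin n → Bool) (α : UA n q) (τ : Ann n → Bool) : Fin n → Bool :=
  fun i => if h : q i = true then α ⟨i, h⟩ else τ (i, annU q α i)

/-- The assignment realizing the instantiation `φ^σ`: existential variables get
their `σ`-values, universal variables get the value `ρ` assigns to the
corresponding annotated copy. -/
def combS {n : ℕ} (q : Fin n → Bool) (σ : EA n q) (ρ : Ann n → Bool) : Fin n → Bool :=
  fun i => if h : q i = false then σ ⟨i, h⟩ else ρ (i, annE q σ i)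

/-- De-annotation `(τ|_{E^α})^{-α}` of an assignment of the annotated
existential variables. -/
def extrE {n : ℕ} (q : Fin n → Bool) (α : UA n q) (τ : Ann n → Bool) : EA n q :=
  fun j => τ (j.1, annU q α j.1)

/-- De-annotation `(ρ|_{U^σ})^{-σ}` of an assignment of the annotated
universal variables. -/
def extrU {n : ℕ} (q : Fin n → Bool) (σ : EA n q) (ρ : Ann n → Bool) : UA n q :=
  fun j => ρ (j.1, annE q σ j.1)

/-- The combined assignment `ασ`. -/
def merge {n : ℕ} (q : Fin n → Bool) (α : UA n q) (σ : EA n q) : Fin n → Bool :=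
  fun i => if h : q i = true then α ⟨i, h⟩ else σ ⟨i, by simpa using h⟩
-- auxiliary defs
variable {n : ℕ}

def tailQ (q : Fin (n+1) → Bool) : Fin n → Bool := fun i => q i.succ

def tailU (q : Fin (n+1) → Bool) (α : UA (n+1) q) : UA n (tailQ q) :=
  fun j => α ⟨j.1.succ, j.2⟩

def consU (q : Fin (n+1) → Bool) (b : Bool) (α' : UA n (tailQ q)) : UA (n+1) q :=
  fun x => Fin.cases (motive := fun i => q i = true → Bool) (fun _ => b)
    (fun i h => α' ⟨i, h⟩) x.1 x.2

def shiftT (b : Bool) (τ : Ann (n+1) → Bool) : Ann n → Bool :=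
  fun p => τ (p.1.succ, Fin.cases (some b) p.2)

def shiftF (τ : Ann (n+1) → Bool) : Ann n → Bool :=
  fun p => τ (p.1.succ, Fin.cases none p.2)

def glueT (τt τf : Ann n → Bool) : Ann (n+1) → Bool :=
  fun p => Fin.cases (motive := fun _ => Bool) false
    (fun i => match p.2 0 with
      | some true => τt (i, fun k => p.2 k.succ)
      | some false => τf (i, fun k => p.2 k.succ)
      | none => false) p.1

def glueF (b : Bool) (τb : Ann n → Bool) : Ann (n+1) → Bool :=
  fun p => Fin.cases (motive := fun _ => Bool) b
    (fun i => τb (i, fun k => p.2 k.succ)) p.1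

lemma consU_zero (q : Fin (n+1) → Bool) (hq : q 0 = true) (b : Bool)
    (α' : UA n (tailQ q)) : consU q b α' ⟨0, hq⟩ = b := by
  simp [consU]

lemma tailU_consU (q : Fin (n+1) → Bool) (b : Bool) (α' : UA n (tailQ q)) :
    tailU q (consU q b α') = α' := by
  funext j
  simp [tailU, consU]

lemma shiftT_glueT (b : Bool) (τt τf : Ann n → Bool) :
    shiftT b (glueT τt τf) = bif b then τt else τf := by
  cases b <;> (funext p; obtain ⟨i, ω⟩ := p) <;> simp [shiftT, glueT]

lemma shiftF_glueF (b : Bool) (τb : Ann n → Bool) :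
    shiftF (glueF b τb) = τb := by
  funext p; obtain ⟨i, ω⟩ := p; simp [shiftF, glueF]

lemma glueF_zero (b : Bool) (τb : Ann n → Bool) (ω : Fin (n+1) → Option Bool) :
    glueF b τb (0, ω) = b := by simp [glueF]

lemma glueT_shift (τt τf : Ann n → Bool) (i : Fin n) (ω : Fin (n+1) → Option Bool) :
    glueT τt τf (i.succ, ω) =
      match ω 0 with
      | some true => τt (i, fun k => ω k.succ)
      | some false => τf (i, fun k => ω k.succ)
      | none => false := by simp [glueT]

lemma annU_succ_true (q : Fin (n+1) → Bool) (hq : q 0 = true) (α : UA (n+1) q)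
    (k : Fin n) :
    annU q α k.succ = Fin.cases (some (α ⟨0, hq⟩)) (annU (tailQ q) (tailU q α) k) := by
  funext i
  refine Fin.cases ?_ (fun i => ?_) i
  · simp [annU, hq, Fin.succ_pos]
  · simp only [annU, Fin.cases_succ, tailQ, tailU]
    by_cases h : q i.succ = true ∧ i.succ < k.succ
    · grind
    · grind

lemma annU_succ_false (q : Fin (n+1) → Bool) (hq : ¬ q 0 = true) (α : UA (n+1) q)
    (k : Fin n) :
    annU q α k.succ = Fin.cases none (annU (tailQ q) (tailU q α) k) := by
  funext i
  refine Fin.cases ?_ (fun i => ?_) i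
  · simp [annU, hq]
  · simp only [annU, Fin.cases_succ, tailQ, tailU]
    by_cases h : q i.succ = true ∧ i.succ < k.succ
    · grind
    · grind

lemma annU_zero (q : Fin (n+1) → Bool) (α : UA (n+1) q) :
    annU q α 0 = fun _ => none := by
  funext i; simp [annU]

lemma combA_succ_true (q : Fin (n+1) → Bool) (hq : q 0 = true) (α : UA (n+1) q)
    (τ : Ann (n+1) → Bool) :
    combA q α τ = Fin.cons (α ⟨0, hq⟩)
      (combA (tailQ q) (tailU q α) (shiftT (α ⟨0, hq⟩) τ)) := by
  funext i
  refine Fin.cases ?_ (fun k => ?_) i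
  · simp [combA, hq]
  · simp only [Fin.cons_succ, combA, tailQ, tailU, shiftT]
    by_cases h : q k.succ = true
    · simp [h]
    · simp [h]
      exact congrArg (fun w => τ (k.succ, w)) (annU_succ_true q hq α k)

lemma combA_succ_false (q : Fin (n+1) → Bool) (hq : ¬ q 0 = true) (α : UA (n+1) q)
    (τ : Ann (n+1) → Bool) :
    combA q α τ = Fin.cons (τ (0, fun _ => none))
      (combA (tailQ q) (tailU q α) (shiftF τ)) := by
  funext i
  refine Fin.cases ?_ (fun k => ?_) i
  · simp only [Fin.cons_zero, combA]
    rw [dif_neg hq, annU_zero]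
  · simp only [Fin.cons_succ, combA, tailQ, tailU, shiftF]
    by_cases h : q k.succ = true
    · simp [h]
    · simp [h]
      exact congrArg (fun w => τ (k.succ, w)) (annU_succ_false q hq α k)

lemma skolem : ∀ (n : ℕ) (q : Fin n → Bool) (φ : (Fin n → Bool) → Bool),
    Qeval n q φ ↔ ∃ τ : Ann n → Bool, ∀ α : UA n q, φ (combA q α τ) = true := by
  intro n
  induction n with
  | zero =>
    intro q φ
    have key : ∀ (α : UA 0 q) (τ : Ann 0 → Bool),
        combA q α τ = fun i => i.elim0 := fun α τ => funext fun i => i.elim0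
    constructor
    · intro h
      exact ⟨fun _ => false, fun α => by rw [key]; exact h⟩
    · rintro ⟨τ, hτ⟩
      have := hτ (fun x => x.1.elim0)
      exact (congrArg φ (key _ τ)).symm.trans this
  | succ n ih =>
    intro q φ
    by_cases hq : q 0 = true
    · have hQ : Qeval (n+1) q φ ↔
          ∀ b, Qeval n (tailQ q) (fun t => φ (Fin.cons b t)) := by
        show (if q 0 = true then _ else _) ↔ _
        rw [if_pos hq]; exact Iff.rfl
      rw [hQ]
      constructor
      · intro h
        obtain ⟨τt, ht⟩ := (ih _ _).mp (h true)
        obtain ⟨τf, hf⟩ := (ih _ _).mp (h false)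
        refine ⟨glueT τt τf, fun α => ?_⟩
        rw [combA_succ_true q hq α, shiftT_glueT]
        cases hb : α ⟨0, hq⟩
        · simpa using hf (tailU q α)
        · simpa using ht (tailU q α)
      · rintro ⟨τ, hτ⟩ b
        refine (ih _ _).mpr ⟨shiftT b τ, fun α' => ?_⟩
        have := hτ (consU q b α')
        rw [combA_succ_true q hq (consU q b α') τ, consU_zero, tailU_consU] at this
        simpa using this
    · have hQ : Qeval (n+1) q φ ↔
          ∃ b, Qeval n (tailQ q) (fun t => φ (Fin.cons b t)) := by
        show (if q 0 = true then _ else _) ↔ _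
        rw [if_neg hq]; exact Iff.rfl
      rw [hQ]
      constructor
      · rintro ⟨b, hb⟩
        obtain ⟨τb, hτb⟩ := (ih _ _).mp hb
        refine ⟨glueF b τb, fun α => ?_⟩
        rw [combA_succ_false q hq α, glueF_zero, shiftF_glueF]
        simpa using hτb (tailU q α)
      · rintro ⟨τ, hτ⟩
        refine ⟨τ (0, fun _ => none), (ih _ _).mpr ⟨shiftF τ, fun α' => ?_⟩⟩
        have := hτ (consU q false α')
        rw [combA_succ_false q hq (consU q false α') τ, tailU_consU] at this
        simpa using this

/-- Universal expansion lemma: a prenex QBF `Π.φ` is false iff there is a set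
`A` of full universal assignments such that the conjunction
`⋀_{α ∈ A} φ^α` of the instantiations (existential variables annotated per
`α`, annotated copies shared exactly when the annotations coincide) is
unsatisfiable. -/
theorem stmt2 (n : ℕ) (q : Fin n → Bool) (φ : (Fin n → Bool) → Bool) :
    ¬ Qeval n q φ ↔
      ∃ A : Set (UA n q),
        ¬ ∃ τ : Ann n → Bool, ∀ α ∈ A, φ (combA q α τ) = true := by
  constructor
  · intro h
    refine ⟨Set.univ, ?_⟩
    rintro ⟨τ, hτ⟩
    exact h ((skolem n q φ).mpr ⟨τ, fun α => hτ α (Set.mem_univ α)⟩)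
  · rintro ⟨A, hA⟩ h
    obtain ⟨τ, hτ⟩ := (skolem n q φ).mp h
    exact hA ⟨τ, fun α _ => hτ α⟩

end QBF
end

section
/- Let Φ = Π.φ be a prenex QBF with existential variables E. Then Φ is true if and only if there exists a set S of full assignments σ : E → Bool such that the disjunction over σ ∈ S of the instantiations φ^σ (with universal variables annotated per σ and treated as fresh variables) is valid (a tautology). -/
namespace QBF

section Aux
variable {n : ℕ} (q : Fin (n+1) → Bool)

def restr (σ : EA (n+1) q) : EA n (fun i => q i.succ) :=
  fun j => σ ⟨j.1.succ, j.2⟩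

def extnd (b : Bool) (σ' : EA n (fun i => q i.succ)) : EA (n+1) q :=
  fun j => if h : j.1 = 0 then b else
    σ' ⟨j.1.pred h, by show q (j.1.pred h).succ = false; rw [Fin.succ_pred]; exact j.2⟩

lemma restr_extnd (b : Bool) (σ' : EA n (fun i => q i.succ)) :
    restr q (extnd q b σ') = σ' := by
  funext j
  show extnd q b σ' ⟨j.1.succ, _⟩ = σ' j
  rw [extnd, dif_neg (Fin.succ_ne_zero j.1)]
  exact congrArg σ' (Subtype.ext (Fin.pred_succ (h := Fin.succ_ne_zero j.1)))

lemma annE_zero (σ : EA (n+1) q) : annE q σ 0 = fun _ => none := by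
  funext k
  rw [annE]
  exact dif_neg (fun h => absurd h.2 (Fin.not_lt_zero k))

lemma annE_succ (σ : EA (n+1) q) (i : Fin n) :
    annE q σ i.succ = Fin.cons (if h : q 0 = false then some (σ ⟨0, h⟩) else none)
      (annE (fun k => q k.succ) (restr q σ) i) := by
  funext k
  induction k using Fin.cases with
  | zero =>
    rw [Fin.cons_zero]
    by_cases h : q 0 = false
    · rw [annE, dif_pos ⟨h, Fin.succ_pos i⟩, dif_pos h]
    · rw [annE, dif_neg (fun hh => h hh.1), dif_neg h]
  | succ k =>
    rw [Fin.cons_succ]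
    show _ = annE _ _ i k
    rw [annE, annE]
    by_cases h : q k.succ = false ∧ k < i
    · rw [dif_pos ⟨h.1, Fin.succ_lt_succ_iff.mpr h.2⟩, dif_pos h]
      rfl
    · rw [dif_neg (fun hh => h ⟨hh.1, Fin.succ_lt_succ_iff.mp hh.2⟩), dif_neg h]

lemma combS_succ (σ : EA (n+1) q) (ρ : Ann (n+1) → Bool) :
    combS q σ ρ = Fin.cons (if h : q 0 = false then σ ⟨0,h⟩ else ρ (0, fun _ => none))
      (combS (fun i => q i.succ) (restr q σ)
        (fun p => ρ (p.1.succ, Fin.cons (if h : q 0 = false then some (σ ⟨0,h⟩) else none) p.2))) := by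
  funext j
  induction j using Fin.cases with
  | zero =>
    rw [Fin.cons_zero]
    show (if h : q 0 = false then σ ⟨0,h⟩ else ρ (0, annE q σ 0)) = _
    by_cases h : q 0 = false
    · rw [dif_pos h, dif_pos h]
    · rw [dif_neg h, dif_neg h, annE_zero]
  | succ i =>
    rw [Fin.cons_succ]
    show (if h : q i.succ = false then σ ⟨i.succ,h⟩ else ρ (i.succ, annE q σ i.succ)) = _
    show _ = (if h : q i.succ = false then restr q σ ⟨i,h⟩ else _)
    by_cases h : q i.succ = false
    · rw [dif_pos h, dif_pos h]; rfl
    · rw [dif_neg h, dif_neg h, annE_succ]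
end Aux

/-- Existential expansion lemma: a prenex QBF `Π.φ` is true iff there is a set
`S` of full existential assignments such that the disjunction
`⋁_{σ ∈ S} φ^σ` of the instantiations (universal variables annotated per `σ`)
is valid: every assignment `ρ` of the annotated universal variables satisfies
some disjunct. -/
theorem stmt3 (n : ℕ) (q : Fin n → Bool) (φ : (Fin n → Bool) → Bool) :
    Qeval n q φ ↔
      ∃ S : Set (EA n q),
        ∀ ρ : Ann n → Bool, ∃ σ ∈ S, φ (combS q σ ρ) = true := by
  induction n with
  | zero =>
    have key : ∀ (σ : EA 0 q) (ρ : Ann 0 → Bool), combS q σ ρ = fun i => i.elim0 :=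
      fun σ ρ => funext fun i => i.elim0
    constructor
    · intro h
      exact ⟨Set.univ, fun ρ => ⟨fun j => false, Set.mem_univ _, (congrArg φ (key _ ρ)).trans h⟩⟩
    · rintro ⟨S, hS⟩
      obtain ⟨σ, -, h⟩ := hS (fun _ => false)
      show φ (fun i => i.elim0) = true
      rw [← key σ (fun _ => false)]
      exact h
  | succ n ih =>
    by_cases hq : q 0 = true
    · have hqf : ¬ q 0 = false := by simp [hq]
      rw [show Qeval (n+1) q φ =
          ∀ b : Bool, Qeval n (fun i => q i.succ) (fun τ => φ (Fin.cons b τ)) from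
        if_pos hq]
      constructor
      · intro h
        choose S' hS' using fun b => (ih _ _).mp (h b)
        refine ⟨{σ | ∃ b, ∃ σ' ∈ S' b, σ = extnd q b σ'}, fun ρ => ?_⟩
        obtain ⟨σ', hσ', hφ⟩ := hS' (ρ (0, fun _ => none))
          (fun p => ρ (p.1.succ, Fin.cons none p.2))
        refine ⟨extnd q (ρ (0, fun _ => none)) σ', ⟨_, σ', hσ', rfl⟩, ?_⟩
        rw [combS_succ]
        simp only [dif_neg hqf, restr_extnd]
        exact hφ
      · rintro ⟨S, hS⟩ b
        rw [ih]
        refine ⟨restr q '' S, fun ρ' => ?_⟩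
        obtain ⟨σ, hσ, hφ⟩ := hS
          (fun p => Fin.cases (motive := fun _ => Bool) b
            (fun i => ρ' (i, p.2 ∘ Fin.succ)) p.1)
        refine ⟨restr q σ, ⟨σ, hσ, rfl⟩, ?_⟩
        rw [combS_succ] at hφ
        simp only [dif_neg hqf, Fin.cases_zero, Fin.cases_succ] at hφ
        have harg : (fun p : Ann n =>
            ρ' (p.1, (Fin.cons (none : Option Bool) p.2) ∘ Fin.succ)) = ρ' := by
          funext p
          have : (Fin.cons (none : Option Bool) p.2) ∘ Fin.succ = p.2 :=
            funext fun k => Fin.cons_succ _ _ _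
          rw [this]
          rfl
        rw [harg] at hφ
        exact hφ
    · have hqf : q 0 = false := by simpa using hq
      rw [show Qeval (n+1) q φ =
          ∃ b : Bool, Qeval n (fun i => q i.succ) (fun τ => φ (Fin.cons b τ)) from
        if_neg hq]
      constructor
      · rintro ⟨b, hb⟩
        obtain ⟨S', hS'⟩ := (ih _ _).mp hb
        refine ⟨extnd q b '' S', fun ρ => ?_⟩
        obtain ⟨σ', hσ', hφ⟩ := hS' (fun p => ρ (p.1.succ, Fin.cons (some b) p.2))
        refine ⟨extnd q b σ', ⟨σ', hσ', rfl⟩, ?_⟩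
        rw [combS_succ]
        have h0 : extnd q b σ' ⟨0, hqf⟩ = b := dif_pos rfl
        simp only [dif_pos hqf, h0, restr_extnd]
        exact hφ
      · rintro ⟨S, hS⟩
        by_contra hcon
        push_neg at hcon
        have hfail : ∀ b : Bool, ∃ ρ' : Ann n → Bool,
            ∀ σ' ∈ (restr q '' {σ | σ ∈ S ∧ σ ⟨0, hqf⟩ = b}),
              ¬ φ (Fin.cons b (combS (fun i => q i.succ) σ' ρ')) = true := by
          intro b
          by_contra hb
          push_neg at hb
          exact hcon b ((ih _ _).mpr ⟨_, hb⟩)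
        choose ρf hρf using hfail
        obtain ⟨σ, hσ, hφ⟩ := hS (fun p =>
          Fin.cases (motive := fun _ => Bool) false
            (fun i => (p.2 0).elim false (fun bb => ρf bb (i, p.2 ∘ Fin.succ))) p.1)
        rw [combS_succ] at hφ
        simp only [dif_pos hqf] at hφ
        apply hρf (σ ⟨0, hqf⟩) (restr q σ) ⟨σ, ⟨hσ, rfl⟩, rfl⟩
        have harg : (fun p : Ann n =>
            (Fin.cases (motive := fun _ => Bool) false
              (fun i => ((Fin.cons (some (σ ⟨0, hqf⟩)) p.2 : Fin (n+1) → Option Bool) 0).elim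
                false (fun bb => ρf bb (i, (Fin.cons (some (σ ⟨0, hqf⟩)) p.2) ∘ Fin.succ)))
              p.1.succ : Bool)) = ρf (σ ⟨0, hqf⟩) := by
          funext p
          rw [Fin.cases_succ, Fin.cons_zero]
          have : (Fin.cons (some (σ ⟨0, hqf⟩)) p.2 : Fin (n+1) → Option Bool) ∘ Fin.succ = p.2 :=
            funext fun k => Fin.cons_succ _ _ _
          rw [this]
          rfl
        rw [harg] at hφ
        exact hφ

end QBF
end

section
/- Let Φ = Π.φ be a prenex QBF with universal variables U and existential variables E, let A be a set of full universal assignments, and suppose the conjunction ⋀_{α ∈ A} φ^α is satisfiable with satisfying assignment τ on the annotated existential variables. Define S = { (τ|_{E^α})^{-α} : α ∈ A }. Then S completes A: for every α ∈ A there exists σ ∈ S such that the combined assignment ασ satisfies φ. -/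
namespace QBF

/-- If the conjunction `⋀_{α ∈ A} φ^α` is satisfied by `τ` and
`S = { (τ|_{E^α})^{-α} : α ∈ A }`, then `S` completes `A`: for every `α ∈ A`
there is `σ ∈ S` with `φ(ασ) = true`. -/
theorem stmt7 (n : ℕ) (q : Fin n → Bool) (φ : (Fin n → Bool) → Bool)
    (A : Set (UA n q)) (τ : Ann n → Bool)
    (hτ : ∀ α ∈ A, φ (combA q α τ) = true)
    (S : Set (EA n q)) (hS : S = {σ | ∃ α ∈ A, σ = extrE q α τ}) :
    ∀ α ∈ A, ∃ σ ∈ S, φ (merge q α σ) = true := by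
  intro α hα
  refine ⟨extrE q α τ, by rw [hS]; exact ⟨α, hα, rfl⟩, ?_⟩
  have : merge q α (extrE q α τ) = combA q α τ := by
    funext i
    simp only [merge, combA, extrE]
  rw [this]; exact hτ α hα

end QBF
end

section
/- Let Φ = Π.φ be a prenex QBF, S a set of full existential assignments, and suppose ⋀_{σ ∈ S} ¬φ^σ is satisfiable with satisfying assignment ρ on the annotated universal variables. Define A = { (ρ|_{U^σ})^{-σ} : σ ∈ S }. Then A completes S: for every σ ∈ S there exists α ∈ A such that the combined assignment ασ falsifies φ. -/
namespace QBF

/-- If the conjunction `⋀_{σ ∈ S} ¬φ^σ` is satisfied by `ρ` and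
`A = { (ρ|_{U^σ})^{-σ} : σ ∈ S }`, then `A` completes `S`: for every `σ ∈ S`
there is `α ∈ A` with `φ(ασ) = false`. -/
theorem stmt8 (n : ℕ) (q : Fin n → Bool) (φ : (Fin n → Bool) → Bool)
    (S : Set (EA n q)) (ρ : Ann n → Bool)
    (hρ : ∀ σ ∈ S, φ (combS q σ ρ) = false)
    (A : Set (UA n q)) (hA : A = {α | ∃ σ ∈ S, α = extrU q σ ρ}) :
    ∀ σ ∈ S, ∃ α ∈ A, φ (merge q α σ) = false := by
  intro σ hσ
  refine ⟨extrU q σ ρ, by rw [hA]; exact ⟨σ, hσ, rfl⟩, ?_⟩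
  have : merge q (extrU q σ ρ) σ = combS q σ ρ := by
    funext i
    simp only [merge, combS, extrU]
    by_cases h : q i = true
    · simp [h]
    · simp [h]
  rw [this]
  exact hρ σ hσ

end QBF
end

section
/- Let φ be a Boolean function over U ⊕ E with U, E finite. The 2QBF ∃E ∀U. φ is true (some σ : E → Bool satisfies φ(ασ) = true for all α : U → Bool) if and only if the disjunction ⋁_{σ ∈ Σ_E} φ^σ over all full existential assignments, with each σ receiving its own copy of the universal variables, is a tautology. -/
/-- Full existential expansion of a 2QBF `∃E ∀U. φ`: the 2QBF is true iff the
disjunction `⋁_{σ ∈ Σ_E} φ^σ`, in which every existential assignment `σ` gets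
its own copy of the universal variables (so the disjunction is a formula over
the variable set `Σ_E × U`), is a tautology. -/
theorem stmt13 {U E : Type} [Fintype U] [Fintype E]
    (φ : (U ⊕ E → Bool) → Bool) :
    (∃ σ : E → Bool, ∀ α : U → Bool, φ (Sum.elim α σ) = true) ↔
    (∀ ρ : (E → Bool) × U → Bool, ∃ σ : E → Bool,
        φ (Sum.elim (fun u => ρ (σ, u)) σ) = true) := by
  constructor
  · rintro ⟨σ, hσ⟩ ρ
    exact ⟨σ, hσ _⟩
  · intro h
    by_contra hc
    push_neg at hc
    choose α hα using fun σ => hc σ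
    obtain ⟨σ, hσ⟩ := h (fun p => α p.1 p.2)
    exact absurd hσ (by simpa using hα σ)
end

section
/- In the first iteration of the non-recursive expansion algorithm, starting from A₀ = {α₀} with an arbitrary α₀ : U → Bool: if φ^{α₀} is satisfiable yielding σ₁ (by de-annotating the model), and ¬φ^{σ₁} is satisfiable yielding α₁ (by de-annotating its model), then α₁ ≠ α₀, so A strictly grows: A₁ = A₀ ∪ {α₁} has cardinality 2. -/
namespace QBF

/-- First iteration of the non-recursive expansion algorithm: starting from
`A₀ = {α₀}`, if `φ^{α₀}` is satisfiable yielding `σ₁` by de-annotation, and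
`¬φ^{σ₁}` is satisfiable yielding `α₁` by de-annotation, then `α₁ ≠ α₀`, so
`A₁ = A₀ ∪ {α₁}` has cardinality 2. -/
theorem stmt16 (n : ℕ) (q : Fin n → Bool) (φ : (Fin n → Bool) → Bool)
    (α₀ : UA n q) (τ : Ann n → Bool)
    (h1 : φ (combA q α₀ τ) = true)
    (σ₁ : EA n q) (hσ : σ₁ = extrE q α₀ τ)
    (ρ : Ann n → Bool) (h2 : φ (combS q σ₁ ρ) = false)
    (α₁ : UA n q) (hα : α₁ = extrU q σ₁ ρ) :
    α₁ ≠ α₀ ∧ (({α₀} ∪ {α₁} : Set (UA n q))).ncard = 2 := by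
  have e1 : merge q α₀ σ₁ = combA q α₀ τ := by
    funext i
    simp only [merge, combA]
    by_cases h : q i = true
    · simp [h]
    · simp [h, hσ, extrE]
  have e2 : merge q α₁ σ₁ = combS q σ₁ ρ := by
    funext i
    simp only [merge, combS]
    by_cases h : q i = true
    · simp [h, hα, extrU]
    · simp [h]
  have hne : α₁ ≠ α₀ := by
    intro h
    rw [h, e1] at e2
    rw [← e2, h1] at h2
    simp at h2
  refine ⟨hne, ?_⟩
  rw [Set.singleton_union, Set.ncard_pair hne.symm]

end QBF
end
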